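/- Let U, A₁, V ∈ SL₂(ℂ). The trace of the endomorphism of sl₂(ℂ) given by ξ ↦ (U ξ A₁ V)₀ equals ½·tr(U A₁ V) + tr(U V⁻¹ A₁⁻¹). -/

import Mathlib

/-- `sl₂(ℂ)`: the space of traceless `2×2` complex matrices, as a submodule of `M₂(ℂ)`. -/
noncomputable def sl2 : Submodule ℂ (Matrix (Fin 2) (Fin 2) ℂ) where
  carrier := {X | X.trace = 0}
  add_mem' := by
    intro a b ha hb
    simp only [Set.mem_setOf_eq] at *
    simp [Matrix.trace_add, ha, hb]
  zero_mem' := by simp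
  smul_mem' := by
    intro c a ha
    simp only [Set.mem_setOf_eq] at *
    simp [Matrix.trace_smul, ha]

/-- For `U, A₁, V ∈ SL₂(ℂ)`, the endomorphism of `sl₂(ℂ)` given by `ξ ↦ (U ξ A₁ V)₀`,
where `M₀ = M − (tr(M)/2)·I` is the traceless part. -/
noncomputable def occEndo (U A₁ V : Matrix.SpecialLinearGroup (Fin 2) ℂ) : sl2 →ₗ[ℂ] sl2 where
  toFun ξ := ⟨(U : Matrix (Fin 2) (Fin 2) ℂ) * ξ.1 * (A₁ : Matrix (Fin 2) (Fin 2) ℂ) *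
      (V : Matrix (Fin 2) (Fin 2) ℂ) -
      (((U : Matrix (Fin 2) (Fin 2) ℂ) * ξ.1 * (A₁ : Matrix (Fin 2) (Fin 2) ℂ) *
        (V : Matrix (Fin 2) (Fin 2) ℂ)).trace / 2) • (1 : Matrix (Fin 2) (Fin 2) ℂ), by
    show Matrix.trace _ = 0
    simp [Matrix.trace_sub, Matrix.trace_smul, Matrix.trace_one]⟩
  map_add' := by
    intro a b
    apply Subtype.ext
    simp [Matrix.mul_add, Matrix.add_mul, Matrix.trace_add, add_div, add_smul]
    abel
  map_smul' := by
    intro c a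
    apply Subtype.ext
    simp [Matrix.mul_smul, Matrix.smul_mul, Matrix.trace_smul, smul_smul, mul_div_assoc,
      smul_sub]

/-! The map is the compression to `sl₂(ℂ)`, along the projection `M ↦ M₀`, of `X ↦ U X W` with
`W = A₁ V`. By cyclicity of the trace its trace equals that of `X ↦ U X₀ W` on `M₂(ℂ)`, namely
`tr U · tr W − ½ tr(U W)`. On the other side, Cayley–Hamilton gives `W⁻¹ = adj W = tr W · 1 − W`
for `W ∈ SL₂(ℂ)`, so `tr(U W⁻¹) = tr U · tr W − tr(U W)`. -/

namespace Matrix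

theorem stdBasis_repr_apply {R m n : Type*} [Semiring R] [Fintype m] [Fintype n]
    (X : Matrix m n R) (i : m) (j : n) : (stdBasis R m n).repr X (i, j) = X i j := by
  simp [stdBasis]

variable {R n : Type*} [CommRing R] [Fintype n] [DecidableEq n]

theorem mul_single_one_mul_apply_same (A B : Matrix n n R) (i j : n) :
    (A * single i j (1 : R) * B) i j = A i i * B j j := by
  rw [Matrix.mul_assoc, mul_apply, Finset.sum_eq_single i] <;> simp_all

theorem trace_mulLeft_comp_mulRight (A B : Matrix n n R) :
    LinearMap.trace R (Matrix n n R) (LinearMap.mulLeft R A ∘ₗ LinearMap.mulRight R B) =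
      A.trace * B.trace := by
  rw [LinearMap.trace_eq_matrix_trace R (stdBasis R n n), trace, Fintype.sum_prod_type, trace,
    trace, Finset.sum_mul_sum]
  simp [LinearMap.toMatrix_apply, stdBasis_eq_single, stdBasis_repr_apply, ← Matrix.mul_assoc,
    mul_single_one_mul_apply_same]

theorem adjugate_fin_two_eq_trace_smul_sub (A : Matrix (Fin 2) (Fin 2) R) :
    adjugate A = A.trace • 1 - A := by
  rw [adjugate_fin_two, trace_fin_two]
  ext i j
  fin_cases i <;> fin_cases j <;> simp

theorem trace_mul_adjugate_fin_two (A B : Matrix (Fin 2) (Fin 2) R) :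
    (A * adjugate B).trace = A.trace * B.trace - (A * B).trace := by
  rw [adjugate_fin_two_eq_trace_smul_sub, Matrix.mul_sub, Matrix.mul_smul, Matrix.mul_one,
    trace_sub, trace_smul, smul_eq_mul, mul_comm]

end Matrix

local notation "M₂" => Matrix (Fin 2) (Fin 2) ℂ

namespace sl2

open Matrix

noncomputable def tracelessPart : M₂ →ₗ[ℂ] sl2 :=
  LinearMap.codRestrict sl2
    (LinearMap.id - (1 / 2 : ℂ) • (traceLinearMap (Fin 2) ℂ ℂ).smulRight 1) fun X => by
      show trace _ = 0
      simp [trace_sub, trace_smul, trace_one]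
      ring

theorem trace_tracelessPart_comp_comp_subtype (L : M₂ →ₗ[ℂ] M₂) :
    LinearMap.trace ℂ sl2 (tracelessPart ∘ₗ L ∘ₗ sl2.subtype) =
      LinearMap.trace ℂ M₂ L - (1 / 2) * (L 1).trace := by
  have hL : L ∘ₗ (traceLinearMap (Fin 2) ℂ ℂ).smulRight 1 =
      (traceLinearMap (Fin 2) ℂ ℂ).smulRight (L 1) := by
    ext X : 1
    simp
  rw [LinearMap.trace_comp_comm', LinearMap.comp_assoc, tracelessPart,
    LinearMap.subtype_comp_codRestrict, LinearMap.comp_sub, LinearMap.comp_id, LinearMap.comp_smul,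
    map_sub, map_smul, hL, LinearMap.trace_smulRight, smul_eq_mul, traceLinearMap_apply]

theorem occEndo_eq (U A₁ V : SpecialLinearGroup (Fin 2) ℂ) :
    occEndo U A₁ V = tracelessPart ∘ₗ
      (LinearMap.mulLeft ℂ (U : M₂) ∘ₗ LinearMap.mulRight ℂ ((A₁ : M₂) * V)) ∘ₗ sl2.subtype := by
  ext ξ : 2
  simp [occEndo, tracelessPart, Matrix.mul_assoc, div_eq_inv_mul, smul_smul]

end sl2

/-- For `U, A₁, V ∈ SL₂(ℂ)`, the trace of the endomorphism `ξ ↦ (U ξ A₁ V)₀` of `sl₂(ℂ)`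
equals `½·tr(U A₁ V) + tr(U V⁻¹ A₁⁻¹)`. -/
theorem trace_occEndo (U A₁ V : Matrix.SpecialLinearGroup (Fin 2) ℂ) :
    LinearMap.trace ℂ sl2 (occEndo U A₁ V) =
      (1 / 2) * ((U : Matrix (Fin 2) (Fin 2) ℂ) * (A₁ : Matrix (Fin 2) (Fin 2) ℂ) *
        (V : Matrix (Fin 2) (Fin 2) ℂ)).trace +
      ((U : Matrix (Fin 2) (Fin 2) ℂ) * ((V⁻¹ : Matrix.SpecialLinearGroup (Fin 2) ℂ) :
        Matrix (Fin 2) (Fin 2) ℂ) * ((A₁⁻¹ : Matrix.SpecialLinearGroup (Fin 2) ℂ) :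
        Matrix (Fin 2) (Fin 2) ℂ)).trace := by
  have hinv : ((V⁻¹ : Matrix.SpecialLinearGroup (Fin 2) ℂ) : M₂) *
      ((A₁⁻¹ : Matrix.SpecialLinearGroup (Fin 2) ℂ) : M₂) = ((A₁ : M₂) * (V : M₂)).adjugate := by
    rw [← Matrix.SpecialLinearGroup.coe_mul, ← mul_inv_rev, Matrix.SpecialLinearGroup.coe_inv,
      Matrix.SpecialLinearGroup.coe_mul]
  rw [sl2.occEndo_eq, sl2.trace_tracelessPart_comp_comp_subtype,
    Matrix.trace_mulLeft_comp_mulRight, Matrix.mul_assoc _ ((V⁻¹ : Matrix.SpecialLinearGroup _ ℂ) : M₂),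
    hinv, Matrix.trace_mul_adjugate_fin_two]
  simp only [LinearMap.comp_apply, LinearMap.mulLeft_apply, LinearMap.mulRight_apply, one_mul,
    Matrix.mul_assoc]
  ring
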